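/- Let d ≥ 1, let Ω ⊆ ℝ^d be open, let ε > 0 and ς₁, ς₂, ς₃ ∈ ℝ, and let c₁, c₂, c₃ : Ω → ℝ be twice continuously differentiable functions satisfying c₁ + c₂ + c₃ = 1 on Ω. Let β : Ω → ℝ be any function. Define the bulk free energy F(c₁,c₂,c₃) = ∑_{i=1}^3 (ς_i/2) c_i² (1 − c_i)², the total free energy density Ψ = (12/ε) F(c₁,c₂,c₃) + ∑_{i=1}^3 (3/8) ε ς_i |∇c_i|², and the chemical potentials μ_i = (12/ε) (∂F/∂c_i)(c₁,c₂,c₃) − (3/4) ε ς_i Δc_i + β for i = 1,2,3. Then at every point of Ω, componentwise for each j ∈ {1,…,d}: ∑_{i=1}^3 (3/4) ε ς_i ∑_{k=1}^d ∂_k(∂_j c_i · ∂_k c_i) = ∂_j Ψ − ∑_{i=1}^3 μ_i ∂_j c_i, i.e., ∑_{i=1}^3 (3/4) ε ς_i ∇·(∇c_i ⊗ ∇c_i) = ∇Ψ − ∑_{i=1}^3 μ_i ∇c_i. -/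

import Mathlib

/-!
For a single `C²` field `c`, the product rule and the symmetry of second derivatives give
`∇·(∇c ⊗ ∇c) = Δc ∇c + ½ ∇|∇c|²`, while the chain rule gives
`∇Ψ = (12/ε) ∑ᵢ ∂F/∂cᵢ ∇cᵢ + ∑ᵢ (3/8) ε ςᵢ ∇|∇cᵢ|²`. Hence `∇Ψ − ∑ᵢ μᵢ ∇cᵢ` equals the
left-hand side plus `β ∑ᵢ ∇cᵢ`, and that last term vanishes because `∑ᵢ cᵢ` is constant on the
open set `Ω`.
-/

/-- Partial derivative of a scalar field on `ℝ^d` in the `k`-th coordinate direction. -/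
noncomputable def pderiv' (d : ℕ) (k : Fin d) (f : (Fin d → ℝ) → ℝ) (x : Fin d → ℝ) : ℝ :=
  fderiv ℝ f x (Pi.single k 1)

open Filter Topology

theorem hasDerivAt_doubleWell (σ u : ℝ) :
    HasDerivAt (fun u => σ / 2 * u ^ 2 * (1 - u) ^ 2) (σ * u * (1 - u) * (1 - 2 * u)) u := by
  refine (((hasDerivAt_pow 2 u).const_mul (σ / 2)).fun_mul
    (((hasDerivAt_id u).const_sub 1).fun_pow 2)).congr_deriv ?_
  simp only [Nat.cast_ofNat, Nat.add_one_sub_one, pow_one, id_eq]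
  ring

section PartialDerivative

variable {d : ℕ} {f g : (Fin d → ℝ) → ℝ} {x : Fin d → ℝ}

theorem pderiv'_add (hf : DifferentiableAt ℝ f x) (hg : DifferentiableAt ℝ g x) (k : Fin d) :
    pderiv' d k (fun y => f y + g y) x = pderiv' d k f x + pderiv' d k g x := by
  simp [pderiv', fderiv_fun_add hf hg]

theorem pderiv'_const_mul (hf : DifferentiableAt ℝ f x) (a : ℝ) (k : Fin d) :
    pderiv' d k (fun y => a * f y) x = a * pderiv' d k f x := by
  simp [pderiv', fderiv_const_mul hf]

theorem pderiv'_sum {ι : Type*} {s : Finset ι} {F : ι → (Fin d → ℝ) → ℝ}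
    (hF : ∀ i ∈ s, DifferentiableAt ℝ (F i) x) (k : Fin d) :
    pderiv' d k (fun y => ∑ i ∈ s, F i y) x = ∑ i ∈ s, pderiv' d k (F i) x := by
  simp [pderiv', fderiv_fun_sum hF]

theorem pderiv'_mul (hf : DifferentiableAt ℝ f x) (hg : DifferentiableAt ℝ g x) (k : Fin d) :
    pderiv' d k (fun y => f y * g y) x = pderiv' d k f x * g x + f x * pderiv' d k g x := by
  simp only [pderiv', fderiv_fun_mul hf hg, add_apply, smul_apply, smul_eq_mul]
  ring

theorem pderiv'_pow (hf : DifferentiableAt ℝ f x) (k : Fin d) :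
    pderiv' d k (fun y => f y ^ 2) x = 2 * f x * pderiv' d k f x := by
  simp only [sq, pderiv'_mul hf hf]
  ring

theorem pderiv'_comp {φ : ℝ → ℝ} {φ' : ℝ} (hφ : HasDerivAt φ φ' (f x))
    (hf : DifferentiableAt ℝ f x) (k : Fin d) :
    pderiv' d k (fun y => φ (f y)) x = φ' * pderiv' d k f x := by
  rw [pderiv', show (fun y => φ (f y)) = φ ∘ f from rfl,
    (hφ.comp_hasFDerivAt x hf.hasFDerivAt).fderiv]
  rfl

theorem sum_pderiv'_eq_zero_of_eventually_sum_eq {ι : Type*} {s : Finset ι}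
    {F : ι → (Fin d → ℝ) → ℝ} {a : ℝ} (hF : ∀ i ∈ s, DifferentiableAt ℝ (F i) x)
    (hsum : (fun y => ∑ i ∈ s, F i y) =ᶠ[𝓝 x] fun _ => a) (k : Fin d) :
    ∑ i ∈ s, pderiv' d k (F i) x = 0 := by
  rw [← pderiv'_sum hF, pderiv', hsum.fderiv_eq]
  simp

theorem differentiableAt_pderiv' (hf : ContDiffAt ℝ 2 f x) (k : Fin d) :
    DifferentiableAt ℝ (pderiv' d k f) x :=
  ((hf.fderiv_right (m := 1) le_rfl).differentiableAt one_ne_zero).clm_apply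
    (differentiableAt_const _)

theorem pderiv'_pderiv'_eq_fderiv_fderiv (hf : ContDiffAt ℝ 2 f x) (a b : Fin d) :
    pderiv' d a (pderiv' d b f) x =
      fderiv ℝ (fderiv ℝ f) x (Pi.single a 1) (Pi.single b 1) := by
  unfold pderiv'
  rw [fderiv_clm_apply ((hf.fderiv_right (m := 1) le_rfl).differentiableAt one_ne_zero)
    (differentiableAt_const _)]
  simp

theorem pderiv'_pderiv'_comm (hf : ContDiffAt ℝ 2 f x) (a b : Fin d) :
    pderiv' d a (pderiv' d b f) x = pderiv' d b (pderiv' d a f) x := by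
  rw [pderiv'_pderiv'_eq_fderiv_fderiv hf, pderiv'_pderiv'_eq_fderiv_fderiv hf,
    hf.isSymmSndFDerivAt (by simp)]

theorem pderiv'_sum_sq_pderiv' (hf : ContDiffAt ℝ 2 f x) (j : Fin d) :
    pderiv' d j (fun y => ∑ k, pderiv' d k f y ^ 2) x =
      2 * ∑ k, pderiv' d k f x * pderiv' d j (pderiv' d k f) x := by
  rw [pderiv'_sum (F := fun k y => pderiv' d k f y ^ 2)
    fun k _ => (differentiableAt_pderiv' hf k).pow 2, Finset.mul_sum]
  refine Finset.sum_congr rfl fun k _ => ?_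
  rw [pderiv'_pow (differentiableAt_pderiv' hf k)]
  ring

theorem sum_pderiv'_pderiv'_mul_pderiv' (hf : ContDiffAt ℝ 2 f x) (j : Fin d) :
    ∑ k, pderiv' d k (fun y => pderiv' d j f y * pderiv' d k f y) x =
      pderiv' d j f x * ∑ k, pderiv' d k (pderiv' d k f) x
        + pderiv' d j (fun y => ∑ k, pderiv' d k f y ^ 2) x / 2 := by
  rw [pderiv'_sum_sq_pderiv' hf, mul_div_cancel_left₀ _ two_ne_zero, Finset.mul_sum,
    ← Finset.sum_add_distrib]
  refine Finset.sum_congr rfl fun k _ => ?_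
  rw [pderiv'_mul (differentiableAt_pderiv' hf j) (differentiableAt_pderiv' hf k),
    pderiv'_pderiv'_comm hf k j]
  ring

theorem pderiv'_freeEnergy {ι : Type*} [Fintype ι] {c : ι → (Fin d → ℝ) → ℝ}
    (hc : ∀ i, ContDiffAt ℝ 2 (c i) x) (a b : ℝ) (ς : ι → ℝ) (j : Fin d) :
    pderiv' d j (fun y => a * ∑ i, (ς i / 2) * (c i y) ^ 2 * (1 - c i y) ^ 2
        + ∑ i, b * ς i * ∑ k, (pderiv' d k (c i) y) ^ 2) x =
      a * ∑ i, ς i * c i x * (1 - c i x) * (1 - 2 * c i x) * pderiv' d j (c i) x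
        + ∑ i, b * ς i * pderiv' d j (fun y => ∑ k, pderiv' d k (c i) y ^ 2) x := by
  have hdiff : ∀ i, DifferentiableAt ℝ (c i) x := fun i => (hc i).differentiableAt two_ne_zero
  have hbulk_diff : ∀ i, DifferentiableAt ℝ (fun y => ς i / 2 * c i y ^ 2 * (1 - c i y) ^ 2) x :=
    fun i => (hasDerivAt_doubleWell (ς i) (c i x)).differentiableAt.comp x (hdiff i)
  have hgrad_diff : ∀ i, DifferentiableAt ℝ (fun y => ∑ k, pderiv' d k (c i) y ^ 2) x :=
    fun i => DifferentiableAt.fun_sum fun k _ => (differentiableAt_pderiv' (hc i) k).pow 2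
  rw [pderiv'_add (by fun_prop) (by fun_prop), pderiv'_const_mul (by fun_prop),
    pderiv'_sum fun i _ => hbulk_diff i, pderiv'_sum fun i _ => (hgrad_diff i).const_mul _]
  simp only [pderiv'_comp (hasDerivAt_doubleWell _ _) (hdiff _), pderiv'_const_mul (hgrad_diff _)]

end PartialDerivative

theorem capillary_stress_identity_general (d : ℕ)
    (Ω : Set (Fin d → ℝ)) (hΩ : IsOpen Ω)
    (ε : ℝ) (ς : Fin 3 → ℝ)
    (c : Fin 3 → (Fin d → ℝ) → ℝ)
    (hc : ∀ i, ContDiffOn ℝ 2 (c i) Ω)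
    (hsum : ∀ x ∈ Ω, ∑ i : Fin 3, c i x = 1)
    (β : (Fin d → ℝ) → ℝ)
    (Ψ : (Fin d → ℝ) → ℝ)
    (hΨ : ∀ y, Ψ y =
      (12 / ε) * ∑ i : Fin 3, (ς i / 2) * (c i y) ^ 2 * (1 - c i y) ^ 2
        + ∑ i : Fin 3, (3 / 8) * ε * ς i * ∑ k : Fin d, (pderiv' d k (c i) y) ^ 2)
    (μ : Fin 3 → (Fin d → ℝ) → ℝ)
    (hμ : ∀ i y, μ i y =
      (12 / ε) * (ς i * c i y * (1 - c i y) * (1 - 2 * c i y))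
        - (3 / 4) * ε * ς i * (∑ k : Fin d, pderiv' d k (pderiv' d k (c i)) y)
        + β y) :
    ∀ x ∈ Ω, ∀ j : Fin d,
      ∑ i : Fin 3, (3 / 4) * ε * ς i *
          ∑ k : Fin d, pderiv' d k (fun y => pderiv' d j (c i) y * pderiv' d k (c i) y) x
        = pderiv' d j Ψ x - ∑ i : Fin 3, μ i x * pderiv' d j (c i) x := by
  intro x hx j
  have hcx : ∀ i, ContDiffAt ℝ 2 (c i) x := fun i => (hc i).contDiffAt (hΩ.mem_nhds hx)
  have hgrad_sum : ∑ i, pderiv' d j (c i) x = 0 :=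
    sum_pderiv'_eq_zero_of_eventually_sum_eq (fun i _ => (hcx i).differentiableAt two_ne_zero)
      (eventually_of_mem (hΩ.mem_nhds hx) hsum) j
  rw [show Ψ = _ from funext hΨ, pderiv'_freeEnergy hcx]
  simp only [hμ, sum_pderiv'_pderiv'_mul_pderiv' (hcx _)]
  simp only [Fin.sum_univ_three] at hgrad_sum ⊢
  linear_combination β x * hgrad_sum

/-- the key tensor-calculus identity (Eq. (14)) of the ternary
Navier–Stokes–Cahn–Hilliard system. With phase fields `c₁, c₂, c₃` that are `C²` on an
open set `Ω ⊆ ℝ^d` and satisfy `c₁ + c₂ + c₃ = 1` on `Ω`, bulk energy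
`F = ∑ᵢ (ςᵢ/2) cᵢ²(1-cᵢ)²`, total free energy density
`Ψ = (12/ε) F + ∑ᵢ (3/8) ε ςᵢ |∇cᵢ|²`, and chemical potentials
`μᵢ = (12/ε)(∂F/∂cᵢ) - (3/4) ε ςᵢ Δcᵢ + β` (with `∂F/∂cᵢ = ςᵢ cᵢ(1-cᵢ)(1-2cᵢ)` and
`β` an arbitrary Lagrange multiplier), at every point of `Ω` and for each component `j`:
`∑ᵢ (3/4) ε ςᵢ ∇·(∇cᵢ ⊗ ∇cᵢ) = ∇Ψ − ∑ᵢ μᵢ ∇cᵢ`. -/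
theorem capillary_stress_identity (d : ℕ) (hd : 1 ≤ d)
    (Ω : Set (Fin d → ℝ)) (hΩ : IsOpen Ω)
    (ε : ℝ) (hε : 0 < ε) (ς : Fin 3 → ℝ)
    (c : Fin 3 → (Fin d → ℝ) → ℝ)
    (hc : ∀ i, ContDiffOn ℝ 2 (c i) Ω)
    (hsum : ∀ x ∈ Ω, ∑ i : Fin 3, c i x = 1)
    (β : (Fin d → ℝ) → ℝ)
    (Ψ : (Fin d → ℝ) → ℝ)
    (hΨ : ∀ y, Ψ y =
      (12 / ε) * ∑ i : Fin 3, (ς i / 2) * (c i y) ^ 2 * (1 - c i y) ^ 2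
        + ∑ i : Fin 3, (3 / 8) * ε * ς i * ∑ k : Fin d, (pderiv' d k (c i) y) ^ 2)
    (μ : Fin 3 → (Fin d → ℝ) → ℝ)
    (hμ : ∀ i y, μ i y =
      (12 / ε) * (ς i * c i y * (1 - c i y) * (1 - 2 * c i y))
        - (3 / 4) * ε * ς i * (∑ k : Fin d, pderiv' d k (pderiv' d k (c i)) y)
        + β y) :
    ∀ x ∈ Ω, ∀ j : Fin d,
      ∑ i : Fin 3, (3 / 4) * ε * ς i *
          ∑ k : Fin d, pderiv' d k (fun y => pderiv' d j (c i) y * pderiv' d k (c i) y) x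
        = pderiv' d j Ψ x - ∑ i : Fin 3, μ i x * pderiv' d j (c i) x :=
  capillary_stress_identity_general d Ω hΩ ε ς c hc hsum β Ψ hΨ μ hμ
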